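/- arXiv:2605.20367 — 3 statements merged into one kernel-verified Lean document; each statement's English description precedes it below -/
import Mathlib

section
/- For all constants C_R, C_inv, C_T, C_P > 0 there exists β > 0, depending only on C_R, C_inv, C_T, C_P, such that the following holds. Let h be a real number with 0 < h ≤ 1, let H and B be real inner product spaces, X a linear subspace of H, and c : X → H, t : X → B, s : X → B linear maps. Let M be a complete linear subspace of B, P : B → B the orthogonal projection onto M, and R : B → X a linear map. Assume: (i) for every x ∈ X, c x = 0 implies s x = 0; (ii) for every b ∈ B one has s(R(P b)) = P b, t(R(P b)) = 0, and ‖R(P b)‖_H ≤ C_R · h^{3/2} · ‖P b‖_B; (iii) (inverse inequality) ‖c x‖_H ≤ C_inv · h⁻¹ · ‖x‖_H for every x ∈ X; (iv) (trace Poincaré inequality) ‖t x − P(t x)‖_B ≤ C_T · h^{1/2} · ‖c x‖_H for every x ∈ X; (v) (discrete Poincaré inequality) for every x ∈ X there exists w ∈ X with c w = 0, t w = 0 and ‖x − w‖_H ≤ C_P · |x|ₕ. Then for every u ∈ X there exists v ∈ X such that a(u, v) ≥ β · |u|ₕ · ‖v‖ₕ. -/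
/-!
Test `a(u, ·)` against `v - w`, where `v = u + (α / h) • R (P (t u))` and `w` is the discrete
Poincaré correction of `v`. Since `a(u, u) = ‖c u‖²`, `a(u, w) = 0` and `s (R p) = p`, one gets
`a(u, v - w) = ‖c u‖² + (α / h) ⟪c u, c (R p)⟫ + h⁻¹ α ‖p‖²` with `p = P (t u)`. The inverse
inequality and the lift bound give `‖c (R p)‖ ≤ C_inv C_R h^{1/2} ‖p‖`, so for
`α = (1 + (C_inv C_R)²)⁻¹` Young's inequality leaves `a(u, v - w) ≥ α/2 (‖c u‖² + h⁻¹ ‖p‖²)`,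
and the trace Poincaré inequality bounds `|u|ₕ²` by a multiple of the right-hand side.
Conversely `|v - w|ₕ = |v|ₕ ≲ |u|ₕ`, and the discrete Poincaré inequality bounds `‖v - w‖_H`
by `|v|ₕ`.
-/

open scoped RealInnerProductSpace

section Projection

variable {E : Type*} [NormedAddCommGroup E] [InnerProductSpace ℝ E] {b p : E}

lemma inner_eq_norm_sq_of_inner_sub_self_eq_zero (hp : ⟪b - p, p⟫ = 0) : ⟪p, b⟫ = ‖p‖ ^ 2 := by
  rw [inner_sub_left, real_inner_self_eq_norm_sq, real_inner_comm] at hp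
  linarith

lemma norm_le_of_inner_sub_self_eq_zero (hp : ⟪b - p, p⟫ = 0) : ‖p‖ ≤ ‖b‖ := by
  have := inner_eq_norm_sq_of_inner_sub_self_eq_zero hp
  nlinarith [real_inner_le_norm p b, norm_nonneg p, norm_nonneg b]

end Projection

section Form

variable {V H B : Type*} [AddCommGroup V] [Module ℝ V]
  [NormedAddCommGroup H] [InnerProductSpace ℝ H] [NormedAddCommGroup B] [InnerProductSpace ℝ B]

lemma nitsche_form_add_smul_sub (c : V →ₗ[ℝ] H) (t s : V →ₗ[ℝ] B) (u r w : V) (k : ℝ) {p : B}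
    (hsr : s r = p) (htr : t r = 0) (hcw : c w = 0) (htw : t w = 0) (hsw : s w = 0) :
    ⟪c u, c (u + k • r - w)⟫ - ⟪s u, t (u + k • r - w)⟫ + ⟪s (u + k • r - w), t u⟫ =
      ‖c u‖ ^ 2 + k * ⟪c u, c r⟫ + k * ⟪p, t u⟫ := by
  simp only [map_sub, map_add, map_smul, hsr, htr, hcw, htw, hsw, smul_zero, add_zero, sub_zero,
    inner_add_left, inner_add_right, real_inner_smul_left, real_inner_smul_right,
    real_inner_self_eq_norm_sq]
  ring

end Form

lemma le_mul_sqrt_of_le_inv_mul_of_le_rpow {a b π C_inv C_R h : ℝ} (hh : 0 < h)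
    (hC : 0 ≤ C_inv) (hab : a ≤ C_inv * h⁻¹ * b) (hb : b ≤ C_R * h ^ ((3 : ℝ) / 2) * π) :
    a ≤ C_inv * C_R * √h * π := by
  have h32 : h ^ ((3 : ℝ) / 2) = h * √h := by
    rw [Real.sqrt_eq_rpow, ← Real.rpow_one_add' hh.le (by norm_num)]; norm_num
  calc a ≤ C_inv * h⁻¹ * (C_R * (h * √h) * π) := by
        rw [← h32]; exact hab.trans (by gcongr)
    _ = C_inv * C_R * √h * π := by field_simp

lemma div_mul_sqrt_mul_eq {α C π h : ℝ} (hh : 0 < h) :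
    α / h * (C * √h * π) = α * C * (π / √h) := by
  have := Real.sqrt_pos.mpr hh
  field_simp
  rw [Real.sq_sqrt hh.le]
  ring

lemma inv_mul_sq_eq_div_sqrt_sq {π h : ℝ} (hh : 0 < h) : h⁻¹ * π ^ 2 = (π / √h) ^ 2 := by
  rw [div_pow, Real.sq_sqrt hh.le]
  ring

lemma young_lower_bound {E : Type*} [NormedAddCommGroup E] [InnerProductSpace ℝ E] (x z : E)
    {π C α h : ℝ} (hh : 0 < h) (hα : 0 ≤ α) (hαC : α * (1 + C ^ 2) ≤ 1)
    (hz : ‖z‖ ≤ C * √h * π) :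
    α / 2 * (‖x‖ ^ 2 + h⁻¹ * π ^ 2) ≤ ‖x‖ ^ 2 + α / h * ⟪x, z⟫ + α / h * π ^ 2 := by
  set y := π / √h
  have hcross : -(α * C * y * ‖x‖) ≤ α / h * ⟪x, z⟫ := by
    have hxz : -(‖z‖ * ‖x‖) ≤ ⟪x, z⟫ := by
      rw [mul_comm]; exact neg_le_of_abs_le (abs_real_inner_le_norm x z)
    rw [← div_mul_sqrt_mul_eq hh, mul_assoc, ← mul_neg]
    gcongr
    nlinarith [norm_nonneg x]
  have hπ : α / h * π ^ 2 = α * y ^ 2 := by rw [← inv_mul_sq_eq_div_sqrt_sq hh]; ring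
  rw [inv_mul_sq_eq_div_sqrt_sq hh, hπ]
  have hα1 : α ≤ 1 := by nlinarith [sq_nonneg C]
  -- Young's inequality for the cross term; `α * C ^ 2 ≤ 1 - α` absorbs its second half
  nlinarith [sq_nonneg (‖x‖ - α * C * y),
    mul_le_mul_of_nonneg_left hαC (by positivity : 0 ≤ α * y ^ 2),
    mul_nonneg (sub_nonneg.mpr hα1) (sq_nonneg ‖x‖)]

lemma sq_add_inv_mul_sq_le {A π T C_T h : ℝ} (hh : 0 < h) (hT0 : 0 ≤ T)
    (hT : T ≤ π + C_T * √h * A) :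
    A ^ 2 + h⁻¹ * T ^ 2 ≤ 2 * (1 + C_T ^ 2) * (A ^ 2 + h⁻¹ * π ^ 2) := by
  have hT2 : T ^ 2 ≤ 2 * π ^ 2 + 2 * C_T ^ 2 * h * A ^ 2 := by
    have := pow_le_pow_left₀ hT0 hT 2
    nlinarith [sq_nonneg (π - C_T * √h * A), Real.sq_sqrt hh.le]
  have hscaled : h⁻¹ * T ^ 2 ≤ 2 * (h⁻¹ * π ^ 2) + 2 * C_T ^ 2 * A ^ 2 := by
    calc h⁻¹ * T ^ 2 ≤ h⁻¹ * (2 * π ^ 2 + 2 * C_T ^ 2 * h * A ^ 2) := by gcongr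
      _ = 2 * (h⁻¹ * π ^ 2) + 2 * C_T ^ 2 * A ^ 2 := by field_simp
  nlinarith [sq_nonneg A,
    mul_nonneg (sq_nonneg C_T) (mul_nonneg (inv_nonneg.mpr hh.le) (sq_nonneg π))]

lemma coercivity_bound {E : Type*} [NormedAddCommGroup E] [InnerProductSpace ℝ E] (x z : E)
    {π T C C_T α h : ℝ} (hh : 0 < h) (hα : 0 ≤ α) (hαC : α * (1 + C ^ 2) ≤ 1)
    (hz : ‖z‖ ≤ C * √h * π) (hT0 : 0 ≤ T) (hT : T ≤ π + C_T * √h * ‖x‖) :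
    α / (4 * (1 + C_T ^ 2)) * (‖x‖ ^ 2 + h⁻¹ * T ^ 2) ≤
      ‖x‖ ^ 2 + α / h * ⟪x, z⟫ + α / h * π ^ 2 :=
  calc α / (4 * (1 + C_T ^ 2)) * (‖x‖ ^ 2 + h⁻¹ * T ^ 2)
      ≤ α / (4 * (1 + C_T ^ 2)) * (2 * (1 + C_T ^ 2) * (‖x‖ ^ 2 + h⁻¹ * π ^ 2)) := by
        gcongr; exact sq_add_inv_mul_sq_le hh hT0 hT
    _ = α / 2 * (‖x‖ ^ 2 + h⁻¹ * π ^ 2) := by field_simp; ring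
    _ ≤ _ := young_lower_bound x z hh hα hαC hz

lemma sq_add_inv_mul_sq_le_three_mul {A E π T C α h : ℝ} (hh : 0 < h) (hα : 0 ≤ α)
    (hαC : α * (1 + C ^ 2) ≤ 1) (hE0 : 0 ≤ E) (hE : E ≤ A + α / h * (C * √h * π))
    (hπ0 : 0 ≤ π) (hπT : π ≤ T) :
    E ^ 2 + h⁻¹ * T ^ 2 ≤ 3 * (A ^ 2 + h⁻¹ * T ^ 2) := by
  rw [div_mul_sqrt_mul_eq hh] at hE
  set y := π / √h
  have hy : y ^ 2 ≤ h⁻¹ * T ^ 2 := by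
    rw [← inv_mul_sq_eq_div_sqrt_sq hh]; gcongr
  have hαC' : α * C ^ 2 ≤ 1 := by nlinarith
  have hα1 : α ≤ 1 := by nlinarith [sq_nonneg C]
  have hE2 : E ^ 2 ≤ 2 * A ^ 2 + 2 * y ^ 2 := by
    have := pow_le_pow_left₀ hE0 hE 2
    nlinarith [sq_nonneg (A - α * C * y), mul_le_mul hα1 hαC' (by positivity) zero_le_one,
      sq_nonneg y, sq_nonneg (α * C)]
  nlinarith [sq_nonneg A]

lemma sq_add_le_three_mul_of_le_mul_sqrt {N A E π T C C_P α h : ℝ} (hh : 0 < h) (hα : 0 ≤ α)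
    (hαC : α * (1 + C ^ 2) ≤ 1) (hE0 : 0 ≤ E) (hE : E ≤ A + α / h * (C * √h * π))
    (hπ0 : 0 ≤ π) (hπT : π ≤ T) (hN0 : 0 ≤ N) (hN : N ≤ C_P * √(E ^ 2 + h⁻¹ * T ^ 2)) :
    N ^ 2 + (E ^ 2 + h⁻¹ * T ^ 2) ≤ 3 * (1 + C_P ^ 2) * (A ^ 2 + h⁻¹ * T ^ 2) := by
  have hN2 := pow_le_pow_left₀ hN0 hN 2
  rw [mul_pow, Real.sq_sqrt (by positivity)] at hN2
  have := sq_add_inv_mul_sq_le_three_mul hh hα hαC hE0 hE hπ0 hπT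
  nlinarith [sq_nonneg C_P]

lemma div_sqrt_mul_sqrt_mul_sqrt_le {a γ K S N : ℝ} (hγ : 0 ≤ γ) (hK : 0 < K) (hS : 0 ≤ S)
    (ha : γ * S ≤ a) (hN : N ≤ K * S) : γ / √K * √S * √N ≤ a := by
  have hK' := Real.sqrt_pos.mpr hK
  have hsqrtN : √N ≤ √K * √S := by
    rw [← Real.sqrt_mul hK.le]
    exact Real.sqrt_le_sqrt hN
  calc γ / √K * √S * √N ≤ γ / √K * √S * (√K * √S) := by gcongr
    _ = γ * (√S * √S) := by field_simp
    _ = γ * S := by rw [Real.mul_self_sqrt hS]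
    _ ≤ a := ha

theorem penalty_free_asymmetric_nitsche_infsup_general
    (C_R C_inv C_T C_P : ℝ)
    (hCinv : 0 < C_inv) :
    ∃ β : ℝ, 0 < β ∧
      ∀ (h : ℝ), 0 < h → h ≤ 1 →
      ∀ (H : Type) [NormedAddCommGroup H] [InnerProductSpace ℝ H]
        (B : Type) [NormedAddCommGroup B] [InnerProductSpace ℝ B]
        (X : Submodule ℝ H)
        (c : X →ₗ[ℝ] H) (t : X →ₗ[ℝ] B) (s : X →ₗ[ℝ] B)
        (M : Submodule ℝ B) (P : B →ₗ[ℝ] B) (R : B →ₗ[ℝ] X),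
        -- `M` is a complete subspace and `P` is the orthogonal projection onto `M`
        IsComplete (M : Set B) →
        (∀ b : B, P b ∈ M ∧ ∀ z ∈ M, ⟪b - P b, z⟫ = 0) →
        -- (i) the kernel of `c` is contained in the kernel of `s`
        (∀ x : X, c x = 0 → s x = 0) →
        -- (ii) `R` lifts elements of `M` with the stated properties
        (∀ b : B, s (R (P b)) = P b ∧ t (R (P b)) = 0 ∧
            ‖(R (P b) : H)‖ ≤ C_R * h ^ ((3 : ℝ) / 2) * ‖P b‖) →
        -- (iii) inverse inequality
        (∀ x : X, ‖c x‖ ≤ C_inv * h⁻¹ * ‖(x : H)‖) →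
        -- (iv) trace Poincaré inequality
        (∀ x : X, ‖t x - P (t x)‖ ≤ C_T * h ^ ((1 : ℝ) / 2) * ‖c x‖) →
        -- (v) discrete Poincaré inequality
        (∀ x : X, ∃ w : X, c w = 0 ∧ t w = 0 ∧
            ‖((x - w : X) : H)‖ ≤ C_P * Real.sqrt (‖c x‖ ^ 2 + h⁻¹ * ‖t x‖ ^ 2)) →
        -- conclusion: inf-sup estimate for the asymmetric bilinear form
        ∀ u : X, ∃ v : X,
          ⟪c u, c v⟫ - ⟪s u, t v⟫ + ⟪s v, t u⟫ ≥
            β * Real.sqrt (‖c u‖ ^ 2 + h⁻¹ * ‖t u‖ ^ 2) *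
              Real.sqrt (‖(v : H)‖ ^ 2 + (‖c v‖ ^ 2 + h⁻¹ * ‖t v‖ ^ 2)) := by
  set α := (1 + (C_inv * C_R) ^ 2)⁻¹
  have hα : 0 ≤ α := by positivity
  have hαC : α * (1 + (C_inv * C_R) ^ 2) ≤ 1 := (inv_mul_cancel₀ (by positivity)).le
  refine ⟨α / (4 * (1 + C_T ^ 2)) / √(3 * (1 + C_P ^ 2)), by positivity, ?_⟩
  intro h hh _ H _ _ B _ _ X c t s M P R _ hP hker hR hinv htr hpoin u
  obtain ⟨hsr, htr0, hr⟩ := hR (t u)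
  set p := P (t u)
  have hproj : ⟪t u - p, p⟫ = 0 := (hP (t u)).2 _ (hP (t u)).1
  have hcr : ‖c (R p)‖ ≤ C_inv * C_R * √h * ‖p‖ :=
    le_mul_sqrt_of_le_inv_mul_of_le_rpow hh hCinv.le (hinv _) hr
  have htu : ‖t u‖ ≤ ‖p‖ + C_T * √h * ‖c u‖ := by
    linarith [norm_le_norm_add_norm_sub' (t u) p, Real.sqrt_eq_rpow h ▸ htr u]
  set v := u + (α / h) • R p
  have htv : t v = t u := by rw [map_add, map_smul, htr0, smul_zero, add_zero]
  have hcv : ‖c v‖ ≤ ‖c u‖ + α / h * (C_inv * C_R * √h * ‖p‖) := by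
    rw [map_add, map_smul]
    exact (norm_add_le _ _).trans (by rw [norm_smul_of_nonneg (by positivity)]; gcongr)
  obtain ⟨w, hcw, htw, hw⟩ := hpoin v
  refine ⟨v - w, ?_⟩
  rw [nitsche_form_add_smul_sub c t s u _ w _ hsr htr0 hcw htw (hker w hcw),
    inner_eq_norm_sq_of_inner_sub_self_eq_zero hproj, map_sub c, map_sub t, hcw, htw, sub_zero,
    sub_zero, htv, ge_iff_le]
  rw [htv] at hw
  exact div_sqrt_mul_sqrt_mul_sqrt_le (by positivity) (by positivity) (by positivity)
    (coercivity_bound _ _ hh hα hαC hcr (norm_nonneg _) htu)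
    (sq_add_le_three_mul_of_le_mul_sqrt hh hα hαC (norm_nonneg _) hcv (norm_nonneg _)
      (norm_le_of_inner_sub_self_eq_zero hproj) (norm_nonneg _) hw)

/-- Abstract inf-sup stability of the penalty-free asymmetric Nitsche bilinear form
`a(u,v) = ⟪c u, c v⟫ − ⟪s u, t v⟫ + ⟪s v, t u⟫` (paper's Lemma 3.8). -/
theorem penalty_free_asymmetric_nitsche_infsup
    (C_R C_inv C_T C_P : ℝ)
    (hCR : 0 < C_R) (hCinv : 0 < C_inv) (hCT : 0 < C_T) (hCP : 0 < C_P) :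
    ∃ β : ℝ, 0 < β ∧
      ∀ (h : ℝ), 0 < h → h ≤ 1 →
      ∀ (H : Type) [NormedAddCommGroup H] [InnerProductSpace ℝ H]
        (B : Type) [NormedAddCommGroup B] [InnerProductSpace ℝ B]
        (X : Submodule ℝ H)
        (c : X →ₗ[ℝ] H) (t : X →ₗ[ℝ] B) (s : X →ₗ[ℝ] B)
        (M : Submodule ℝ B) (P : B →ₗ[ℝ] B) (R : B →ₗ[ℝ] X),
        -- `M` is a complete subspace and `P` is the orthogonal projection onto `M`
        IsComplete (M : Set B) →
        (∀ b : B, P b ∈ M ∧ ∀ z ∈ M, ⟪b - P b, z⟫ = 0) →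
        -- (i) the kernel of `c` is contained in the kernel of `s`
        (∀ x : X, c x = 0 → s x = 0) →
        -- (ii) `R` lifts elements of `M` with the stated properties
        (∀ b : B, s (R (P b)) = P b ∧ t (R (P b)) = 0 ∧
            ‖(R (P b) : H)‖ ≤ C_R * h ^ ((3 : ℝ) / 2) * ‖P b‖) →
        -- (iii) inverse inequality
        (∀ x : X, ‖c x‖ ≤ C_inv * h⁻¹ * ‖(x : H)‖) →
        -- (iv) trace Poincaré inequality
        (∀ x : X, ‖t x - P (t x)‖ ≤ C_T * h ^ ((1 : ℝ) / 2) * ‖c x‖) →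
        -- (v) discrete Poincaré inequality
        (∀ x : X, ∃ w : X, c w = 0 ∧ t w = 0 ∧
            ‖((x - w : X) : H)‖ ≤ C_P * Real.sqrt (‖c x‖ ^ 2 + h⁻¹ * ‖t x‖ ^ 2)) →
        -- conclusion: inf-sup estimate for the asymmetric bilinear form
        ∀ u : X, ∃ v : X,
          ⟪c u, c v⟫ - ⟪s u, t v⟫ + ⟪s v, t u⟫ ≥
            β * Real.sqrt (‖c u‖ ^ 2 + h⁻¹ * ‖t u‖ ^ 2) *
              Real.sqrt (‖(v : H)‖ ^ 2 + (‖c v‖ ^ 2 + h⁻¹ * ‖t v‖ ^ 2)) :=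
  penalty_free_asymmetric_nitsche_infsup_general C_R C_inv C_T C_P hCinv
end

section
/- For all constants C₁, C₂, C₃ > 0 there exist β > 0 and γ > 0, depending only on C₁, C₂, C₃, such that the following holds. Let H be a real inner product space, X a linear subspace of H, |·| a seminorm on X, and set ‖u‖ₕ² := ‖u‖_H² + |u|² for u ∈ X. Let Q be a real vector space, G : Q → X a linear map, and a : X × X → ℝ a bilinear form. Assume: (1) for every u ∈ X there exists ũ ∈ X with a(u, ũ) ≥ C₁ |u|² and ‖ũ‖ₕ ≤ C₂ |u|; (2) a(u, G q) = 0 and |G q| = 0 for all u ∈ X and q ∈ Q; (3) for every u ∈ X there exists r ∈ Q with ‖u − G r‖_H ≤ C₃ |u|. Define B((u,p),(v,q)) := a(u,v) + ⟨G p, v⟩_H + ⟨G q, u⟩_H and ‖(u,p)‖² := ‖u‖ₕ² + ‖G p‖_H². Then for every (u,p) ∈ X × Q there exists (v,q) ∈ X × Q with ‖(v,q)‖ ≤ γ ‖(u,p)‖ and B((u,p),(v,q)) ≥ β ‖(u,p)‖². -/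
open scoped RealInnerProductSpace

/-!
Test `(u, p)` against `v = u' + t • G p`, `q = s • r`, where `u'` is the inf-sup partner of `u`
and `r` its Poincaré witness. Since `a u (G p) = 0`, the pairing is
`a u u' + ⟪G p, u'⟫ + t ‖G p‖² + s ⟪G r, u⟫`: the first term controls `|u|`, the third `‖G p‖`, and
`2 ⟪G r, u⟫ ≥ ‖u‖² - ‖u - G r‖² ≥ ‖u‖² - C₃² |u|²` controls `‖u‖`. Taking
`t = C₂² / (2 C₁) + 1` absorbs the cross term `⟪G p, u'⟫` by AM-GM, and `s = C₁ / (2 C₃²)` lets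
`a u u'` absorb the Poincaré defect. The norm of the test pair is bounded termwise, using
`|G p| = 0`.
-/

lemma sq_norm_sub_sq_norm_sub_le_two_mul_inner {F : Type*} [NormedAddCommGroup F]
    [InnerProductSpace ℝ F] (x y : F) : ‖x‖ ^ 2 - ‖x - y‖ ^ 2 ≤ 2 * ⟪y, x⟫ := by
  rw [norm_sub_sq_real, real_inner_comm]
  linarith [sq_nonneg ‖y‖]

lemma le_sqrt_of_sq_le {x y : ℝ} (h : x ^ 2 ≤ y) : x ≤ √y :=
  (le_abs_self x).trans (Real.abs_le_sqrt h)

lemma sqrt_sq_add_sq_add_sq_le {x y z : ℝ} (hx : 0 ≤ x) (hy : 0 ≤ y) (hz : 0 ≤ z) :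
    √(x ^ 2 + y ^ 2 + z ^ 2) ≤ x + y + z :=
  (Real.sqrt_le_left (by positivity)).2
    (by nlinarith [mul_nonneg hx hy, mul_nonneg hy hz, mul_nonneg hx hz])

lemma min_min_mul_add_add_le {a b c x y z : ℝ} (hx : 0 ≤ x) (hy : 0 ≤ y) (hz : 0 ≤ z) :
    min (min a b) c * (x + y + z) ≤ a * x + b * y + c * z := by
  have ha : min (min a b) c ≤ a := (min_le_left _ _).trans (min_le_left _ _)
  have hb : min (min a b) c ≤ b := (min_le_left _ _).trans (min_le_right _ _)
  have hc : min (min a b) c ≤ c := min_le_right _ _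
  linarith [mul_le_mul_of_nonneg_right ha hx, mul_le_mul_of_nonneg_right hb hy,
    mul_le_mul_of_nonneg_right hc hz]

section SaddlePoint

variable {E Q : Type*} [NormedAddCommGroup E] [InnerProductSpace ℝ E] [AddCommGroup Q] [Module ℝ Q]
  (sn : Seminorm ℝ E) (G : Q →ₗ[ℝ] E) {C₁ C₂ C₃ : ℝ} {u u' : E} {p r : Q}

lemma testPair_norm_le {t s : ℝ} (hC₂ : 0 ≤ C₂) (hC₃ : 0 ≤ C₃) (ht : 0 ≤ t) (hs : 0 ≤ s)
    (hu'₁ : ‖u'‖ ≤ C₂ * sn u) (hu'₂ : sn u' ≤ C₂ * sn u) (hGp : sn (G p) = 0)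
    (hr : ‖u - G r‖ ≤ C₃ * sn u) :
    √(‖u' + t • G p‖ ^ 2 + sn (u' + t • G p) ^ 2 + ‖G (s • r)‖ ^ 2) ≤
      (2 * C₂ + t + s * (1 + C₃)) * √(‖u‖ ^ 2 + sn u ^ 2 + ‖G p‖ ^ 2) := by
  set M := √(‖u‖ ^ 2 + sn u ^ 2 + ‖G p‖ ^ 2)
  have hU : ‖u‖ ≤ M := le_sqrt_of_sq_le (by linarith [sq_nonneg (sn u), sq_nonneg ‖G p‖])
  have hS : sn u ≤ M := le_sqrt_of_sq_le (by linarith [sq_nonneg ‖u‖, sq_nonneg ‖G p‖])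
  have hP : ‖G p‖ ≤ M := le_sqrt_of_sq_le (by linarith [sq_nonneg (sn u), sq_nonneg ‖u‖])
  have hv : ‖u' + t • G p‖ ≤ (C₂ + t) * M := calc
    ‖u' + t • G p‖ ≤ ‖u'‖ + t * ‖G p‖ := by
      simpa [norm_smul, abs_of_nonneg ht] using norm_add_le u' (t • G p)
    _ ≤ C₂ * M + t * M := by gcongr; exact hu'₁.trans (by gcongr)
    _ = (C₂ + t) * M := by ring
  have hsv : sn (u' + t • G p) ≤ C₂ * M := calc
    sn (u' + t • G p) ≤ sn u' := by
      simpa [map_smul_eq_mul, hGp] using map_add_le_add sn u' (t • G p)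
    _ ≤ C₂ * M := hu'₂.trans (by gcongr)
  have hq : ‖G (s • r)‖ ≤ s * (1 + C₃) * M := calc
    ‖G (s • r)‖ = s * ‖G r‖ := by rw [map_smul, norm_smul, Real.norm_of_nonneg hs]
    _ ≤ s * (‖u‖ + ‖u - G r‖) := by gcongr; exact norm_le_insert u (G r)
    _ ≤ s * (M + C₃ * M) := by gcongr; exact hr.trans (by gcongr)
    _ = s * (1 + C₃) * M := by ring
  calc _ ≤ ‖u' + t • G p‖ + sn (u' + t • G p) + ‖G (s • r)‖ :=
        sqrt_sq_add_sq_add_sq_le (norm_nonneg _) (apply_nonneg _ _) (norm_nonneg _)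
    _ ≤ (C₂ + t) * M + C₂ * M + s * (1 + C₃) * M := by gcongr
    _ = _ := by ring

lemma testPair_pairing_lower_bound (a : E →ₗ[ℝ] E →ₗ[ℝ] ℝ) (t s : ℝ) (hC₁ : 0 < C₁) (hs : 0 ≤ s)
    (hau' : C₁ * sn u ^ 2 ≤ a u u') (hu' : ‖u'‖ ≤ C₂ * sn u) (haG : a u (G p) = 0)
    (hr : ‖u - G r‖ ≤ C₃ * sn u) :
    (C₁ / 2 - s * C₃ ^ 2 / 2) * sn u ^ 2 + (t - C₂ ^ 2 / (2 * C₁)) * ‖G p‖ ^ 2 +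
        s / 2 * ‖u‖ ^ 2 ≤
      a u (u' + t • G p) + ⟪G p, u' + t • G p⟫ + ⟪G (s • r), u⟫ := by
  have hB : a u (u' + t • G p) + ⟪G p, u' + t • G p⟫ + ⟪G (s • r), u⟫ =
      a u u' + ⟪G p, u'⟫ + t * ‖G p‖ ^ 2 + s * ⟪G r, u⟫ := by
    simp only [map_add, map_smul, haG, smul_zero, add_zero, inner_add_right,
      real_inner_smul_right, real_inner_smul_left, real_inner_self_eq_norm_sq]
    ring
  have hGpu' : -(C₂ * sn u * ‖G p‖) ≤ ⟪G p, u'⟫ := by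
    refine le_trans ?_ (neg_le_of_abs_le (abs_real_inner_le_norm (G p) u'))
    linarith [mul_le_mul_of_nonneg_left hu' (norm_nonneg (G p))]
  have hGru : ‖u‖ ^ 2 - C₃ ^ 2 * sn u ^ 2 ≤ 2 * ⟪G r, u⟫ := by
    have hr' : ‖u - G r‖ ^ 2 ≤ (C₃ * sn u) ^ 2 := by gcongr
    linarith [sq_norm_sub_sq_norm_sub_le_two_mul_inner u (G r)]
  have amgm : C₂ * sn u * ‖G p‖ ≤ C₁ / 2 * sn u ^ 2 + C₂ ^ 2 / (2 * C₁) * ‖G p‖ ^ 2 := by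
    rw [div_mul_eq_mul_div, div_mul_eq_mul_div, div_add_div _ _ two_ne_zero (by positivity),
      le_div_iff₀ (by positivity)]
    nlinarith [sq_nonneg (C₁ * sn u - C₂ * ‖G p‖)]
  rw [hB]
  linarith [mul_le_mul_of_nonneg_left hGru hs]

end SaddlePoint

/-- Abstract inf-sup stability of the saddle-point bilinear form
`B((u,p),(v,q)) = a(u,v) + ⟪G p, v⟫ + ⟪G q, u⟫` for the curl-elliptic problem
(paper's Lemma 4.2). -/
theorem saddle_point_infsup (C₁ C₂ C₃ : ℝ) (hC₁ : 0 < C₁) (hC₂ : 0 < C₂) (hC₃ : 0 < C₃) :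
    ∃ β γ : ℝ, 0 < β ∧ 0 < γ ∧
      ∀ (H : Type) [NormedAddCommGroup H] [InnerProductSpace ℝ H]
        (X : Submodule ℝ H) (sn : Seminorm ℝ X)
        (Q : Type) [AddCommGroup Q] [Module ℝ Q]
        (G : Q →ₗ[ℝ] X) (a : X →ₗ[ℝ] X →ₗ[ℝ] ℝ),
        -- (1) inf-sup property of `a` w.r.t. the seminorm `sn` and the norm `‖·‖ₕ`
        (∀ u : X, ∃ u' : X, a u u' ≥ C₁ * (sn u) ^ 2 ∧
            Real.sqrt (‖(u' : H)‖ ^ 2 + (sn u') ^ 2) ≤ C₂ * sn u) →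
        -- (2) `a` annihilates the range of `G`, on which `sn` vanishes
        (∀ (u : X) (q : Q), a u (G q) = 0 ∧ sn (G q) = 0) →
        -- (3) discrete Poincaré inequality
        (∀ u : X, ∃ r : Q, ‖((u - G r : X) : H)‖ ≤ C₃ * sn u) →
        -- conclusion
        ∀ (u : X) (p : Q), ∃ (v : X) (q : Q),
          Real.sqrt (‖(v : H)‖ ^ 2 + (sn v) ^ 2 + ‖((G q : X) : H)‖ ^ 2) ≤
            γ * Real.sqrt (‖(u : H)‖ ^ 2 + (sn u) ^ 2 + ‖((G p : X) : H)‖ ^ 2) ∧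
          a u v + ⟪((G p : X) : H), (v : H)⟫ + ⟪((G q : X) : H), (u : H)⟫ ≥
            β * (‖(u : H)‖ ^ 2 + (sn u) ^ 2 + ‖((G p : X) : H)‖ ^ 2) := by
  have hs_coeff : C₁ / 2 - C₁ / (2 * C₃ ^ 2) * C₃ ^ 2 / 2 = C₁ / 4 := by field_simp; ring
  have ht_coeff : C₂ ^ 2 / (2 * C₁) + 1 - C₂ ^ 2 / (2 * C₁) = 1 := by ring
  set t := C₂ ^ 2 / (2 * C₁) + 1
  set s := C₁ / (2 * C₃ ^ 2)
  have hs : 0 < s := by positivity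
  refine ⟨min (min (s / 2) (C₁ / 4)) 1, 2 * C₂ + t + s * (1 + C₃), by positivity, by positivity,
    fun H _ _ X sn Q _ _ G a h₁ h₂ h₃ u p => ?_⟩
  simp only [← Submodule.coe_norm, ← Submodule.coe_inner] at h₁ h₃ ⊢
  obtain ⟨u', hau', hu'⟩ := h₁ u
  obtain ⟨r, hr⟩ := h₃ u
  have hu'₁ : ‖u'‖ ≤ C₂ * sn u := (le_sqrt_of_sq_le (by simp)).trans hu'
  have hu'₂ : sn u' ≤ C₂ * sn u := (le_sqrt_of_sq_le (by simp)).trans hu'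
  refine ⟨u' + t • G p, s • r, ?_, ?_⟩
  · exact testPair_norm_le sn G hC₂.le hC₃.le (by positivity) hs.le hu'₁ hu'₂ (h₂ u p).2 hr
  · have hB := testPair_pairing_lower_bound sn G a t s hC₁ hs.le hau' hu'₁ (h₂ u p).1 hr
    rw [hs_coeff, ht_coeff] at hB
    exact (min_min_mul_add_add_le (sq_nonneg _) (sq_nonneg _) (sq_nonneg _)).trans (by linarith)
end

section
/- Let C₁, C₂, C_inv > 0 and let h be a real number with 0 < h ≤ 1. Let H and B be real inner product spaces, X ⊆ H a linear subspace, and c : X → H, t : X → B linear maps satisfying the inverse inequality ‖c x‖_H ≤ C_inv · h⁻¹ · ‖x‖_H for every x ∈ X. Assume: (boundary splitting) for every v ∈ X there exists v∂ ∈ X with t(v − v∂) = 0 and ‖v∂‖_H ≤ C₁ · h^{1/2} · ‖t v‖_B; (Hodge–Poincaré property) for every w ∈ X with t w = 0 there exists g ∈ X with c g = 0, t g = 0 and ‖w − g‖_H ≤ C₂ · ‖c w‖_H. Then for every v ∈ X there exists g ∈ X with c g = 0, t g = 0 and ‖v − g‖_H ≤ √2 · (C₂ + C₁ · (1 + C₂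 C_inv)) · (‖c v‖_H² + h⁻¹ ‖t v‖_B²)^{1/2}. -/
/-!
Split `v = v∂ + (v - v∂)`. The interior part `v - v∂` has vanishing trace, so the Hodge–Poincaré
property yields `g` in the joint kernel with `‖v - v∂ - g‖ ≤ C₂ ‖c (v - v∂)‖ ≤ C₂ (‖c v‖ + ‖c v∂‖)`.
The inverse inequality turns the factor `h^{1/2}` in the bound on `v∂` into `h^{-1/2}` for `c v∂`,
and since `h ≤ 1` also `h^{1/2} ≤ h^{-1/2}`; so
`‖v - g‖ ≤ (C₂ + C₁ (1 + C₂ C_inv)) (‖c v‖ + h^{-1/2} ‖t v‖)`,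
and `a + b ≤ √2 √(a² + b²)` concludes.
-/

theorem add_le_sqrt_two_mul_sqrt_add_sq (a b : ℝ) : a + b ≤ √2 * √(a ^ 2 + b ^ 2) := by
  rw [← Real.sqrt_mul zero_le_two]
  exact Real.le_sqrt_of_sq_le add_sq_le

theorem sqrt_le_inv_sqrt_of_le_one {h : ℝ} (hh1 : h ≤ 1) : √h ≤ (√h)⁻¹ := by
  have hs1 : √h ≤ 1 := Real.sqrt_le_one.mpr hh1
  rcases (Real.sqrt_nonneg h).eq_or_lt with hs0 | hs0
  · simp [← hs0]
  · exact hs1.trans ((one_le_inv₀ hs0).mpr hs1)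

theorem norm_sub_le_of_norm_sub_sub_le {E F 𝓕 : Type*} [SeminormedAddCommGroup E]
    [SeminormedAddCommGroup F] [FunLike 𝓕 E F] [AddMonoidHomClass 𝓕 E F] (c : 𝓕)
    {C : ℝ} (hC : 0 ≤ C) {v vb g : E} (hg : ‖v - vb - g‖ ≤ C * ‖c (v - vb)‖) :
    ‖v - g‖ ≤ ‖vb‖ + C * (‖c v‖ + ‖c vb‖) :=
  calc ‖v - g‖ = ‖vb + (v - vb - g)‖ := by abel_nf
    _ ≤ ‖vb‖ + C * ‖c (v - vb)‖ := (norm_add_le _ _).trans (by gcongr)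
    _ ≤ ‖vb‖ + C * (‖c v‖ + ‖c vb‖) := by
      rw [map_sub]
      gcongr
      exact norm_sub_le _ _

/-- Abstract discrete Poincaré inequality (paper's Lemma 3.7): every `v ∈ X` is
approximated by an element of the joint kernel of `c` and `t` up to a constant times
the mesh-dependent seminorm `(‖c v‖² + h⁻¹‖t v‖²)^{1/2}`. -/
theorem discrete_poincare
    (C₁ C₂ C_inv : ℝ) (hC₁ : 0 < C₁) (hC₂ : 0 < C₂) (hCinv : 0 < C_inv)
    (h : ℝ) (hh0 : 0 < h) (hh1 : h ≤ 1)
    {H B : Type*} [NormedAddCommGroup H] [InnerProductSpace ℝ H]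
    [NormedAddCommGroup B] [InnerProductSpace ℝ B]
    (X : Submodule ℝ H) (c : X →ₗ[ℝ] H) (t : X →ₗ[ℝ] B)
    -- inverse inequality
    (hinv : ∀ x : X, ‖c x‖ ≤ C_inv * h⁻¹ * ‖(x : H)‖)
    -- boundary splitting
    (hsplit : ∀ v : X, ∃ vb : X, t (v - vb) = 0 ∧
        ‖(vb : H)‖ ≤ C₁ * h ^ ((1 : ℝ) / 2) * ‖t v‖)
    -- Hodge–Poincaré property
    (hHodge : ∀ w : X, t w = 0 → ∃ g : X, c g = 0 ∧ t g = 0 ∧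
        ‖((w - g : X) : H)‖ ≤ C₂ * ‖c w‖) :
    ∀ v : X, ∃ g : X, c g = 0 ∧ t g = 0 ∧
      ‖((v - g : X) : H)‖ ≤ Real.sqrt 2 * (C₂ + C₁ * (1 + C₂ * C_inv)) *
        Real.sqrt (‖c v‖ ^ 2 + h⁻¹ * ‖t v‖ ^ 2) := by
  intro v
  obtain ⟨vb, htw, hvb⟩ := hsplit v
  obtain ⟨g, hcg, htg, hg⟩ := hHodge (v - vb) htw
  refine ⟨g, hcg, htg, ?_⟩
  rw [← Real.sqrt_eq_rpow] at hvb
  have hcvb : ‖c vb‖ ≤ C_inv * C₁ * (√h)⁻¹ * ‖t v‖ :=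
    calc ‖c vb‖ ≤ C_inv * h⁻¹ * (C₁ * √h * ‖t v‖) := (hinv vb).trans (by gcongr)
      _ = C_inv * C₁ * (h⁻¹ * √h) * ‖t v‖ := by ring
      _ = C_inv * C₁ * (√h)⁻¹ * ‖t v‖ := by rw [inv_mul_eq_div, Real.sqrt_div_self]
  have hs : √h ≤ (√h)⁻¹ := sqrt_le_inv_sqrt_of_le_one hh1
  calc ‖((v - g : X) : H)‖ ≤ ‖(vb : H)‖ + C₂ * (‖c v‖ + ‖c vb‖) :=
        norm_sub_le_of_norm_sub_sub_le c hC₂.le hg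
    _ ≤ C₁ * √h * ‖t v‖ + C₂ * (‖c v‖ + C_inv * C₁ * (√h)⁻¹ * ‖t v‖) := by gcongr
    _ ≤ (C₂ + C₁ * (1 + C₂ * C_inv)) * (‖c v‖ + (√h)⁻¹ * ‖t v‖) := by
        linarith [mul_nonneg hC₁.le (norm_nonneg (c v)),
          mul_nonneg (mul_nonneg (mul_nonneg hC₁.le hC₂.le) hCinv.le) (norm_nonneg (c v)),
          mul_nonneg hC₁.le (mul_nonneg (sub_nonneg.mpr hs) (norm_nonneg (t v))),
          mul_nonneg hC₂.le (by positivity : 0 ≤ (√h)⁻¹ * ‖t v‖)]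
    _ ≤ (C₂ + C₁ * (1 + C₂ * C_inv)) * (√2 * √(‖c v‖ ^ 2 + ((√h)⁻¹ * ‖t v‖) ^ 2)) := by
        gcongr
        exact add_le_sqrt_two_mul_sqrt_add_sq _ _
    _ = √2 * (C₂ + C₁ * (1 + C₂ * C_inv)) * √(‖c v‖ ^ 2 + h⁻¹ * ‖t v‖ ^ 2) := by
        rw [mul_pow, inv_pow, Real.sq_sqrt hh0.le]
        ring
end
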